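/- arXiv:2103.09587 — 3 statements merged into one kernel-verified Lean document; each statement's English description precedes it below -/
import Mathlib

section
/- For all languages U, V over an alphabet Σ, (U ∪ V)^{⧢,*} = U^{⧢,*} ⧢ V^{⧢,*}. -/
/-- `IsShuffle u v w` means `w` is an interleaving (shuffle) of `u` and `v`,
i.e. `w = x₁y₁⋯xₙyₙ` with `u = x₁⋯xₙ` and `v = y₁⋯yₙ`. -/
inductive IsShuffle {α : Type*} : List α → List α → List α → Prop
  | nil : IsShuffle [] [] []
  | left {a : α} {u v w : List α} : IsShuffle u v w → IsShuffle (a :: u) v (a :: w)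
  | right {a : α} {u v w : List α} : IsShuffle u v w → IsShuffle u (a :: v) (a :: w)

/-- Shuffle of two languages: `U ⧢ V = ⋃_{x∈U, y∈V} (x ⧢ y)`. -/
def Language.shuffle {α : Type*} (U V : Language α) : Language α :=
  { w | ∃ u ∈ U, ∃ v ∈ V, IsShuffle u v w }

/-- The `n`-fold shuffle of a language with itself (`0`-fold is `{ε}`). -/
def Language.shufflePow {α : Type*} (L : Language α) : ℕ → Language α
  | 0 => 1
  | n + 1 => (L.shufflePow n).shuffle L

/-- Iterated shuffle (shuffle closure): `L^{⧢,*} = ⋃_{n ≥ 0} L^{⧢,n}`. -/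
def Language.shuffleStar {α : Type*} (L : Language α) : Language α :=
  { w | ∃ n, w ∈ L.shufflePow n }

/-- Commutative (permutation) closure: all words with the same letter counts
as some word of `L`. -/
def Language.perm {α : Type*} [DecidableEq α] (L : Language α) : Language α :=
  { u | ∃ w ∈ L, ∀ a : α, u.count a = w.count a }

instance {α : Type*} : Union (Language α) := ⟨fun U V => { w | w ∈ U ∨ w ∈ V }⟩
instance {α : Type*} : Inter (Language α) := ⟨fun U V => { w | w ∈ U ∧ w ∈ V }⟩
instance {α : Type*} : EmptyCollection (Language α) := ⟨{ w | False }⟩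

/-!
Shuffle is a commutative, associative operation on languages with unit `{ε}`, and
`L^{⧢,m} ⧢ L^{⧢,k} ⊆ L^{⧢,m+k}`, so `L^{⧢,*}` is closed under shuffle. Hence a
shuffle of `n` words of `U ∪ V` can be regrouped as a shuffle of its `U`-factors with
its `V`-factors, and conversely `U^{⧢,*} ⧢ V^{⧢,*} ⊆ (U ∪ V)^{⧢,*} ⧢ (U ∪ V)^{⧢,*}`
lies in `(U ∪ V)^{⧢,*}`.
-/

namespace IsShuffle

variable {α : Type*} {u v w : List α}

theorem symm (h : IsShuffle u v w) : IsShuffle v u w := by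
  induction h with
  | nil => exact .nil
  | left _ ih => exact .right ih
  | right _ ih => exact .left ih

theorem nil_right_iff : IsShuffle u [] w ↔ w = u := by
  constructor
  · intro h
    generalize hv : ([] : List α) = v at h
    induction h with
    | nil => rfl
    | left _ ih => rw [ih hv]
    | right _ _ => cases hv
  · rintro rfl
    induction w with
    | nil => exact .nil
    | cons _ _ ih => exact .left ih

theorem assoc {a b x c : List α} (hx : IsShuffle a b x) (hw : IsShuffle x c w) :
    ∃ y, IsShuffle b c y ∧ IsShuffle a y w := by
  induction hw generalizing a b with
  | nil => cases hx; exact ⟨[], .nil, .nil⟩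
  | left _ ih =>
    cases hx with
    | left hx =>
      obtain ⟨y, hy, hw⟩ := ih hx
      exact ⟨y, hy, .left hw⟩
    | right hx =>
      obtain ⟨y, hy, hw⟩ := ih hx
      exact ⟨_ :: y, .left hy, .right hw⟩
  | right _ ih =>
    obtain ⟨y, hy, hw⟩ := ih hx
    exact ⟨_ :: y, .right hy, .right hw⟩

end IsShuffle

namespace Language

variable {α : Type*} {L M : Language α}

theorem shuffle_comm (U V : Language α) : U.shuffle V = V.shuffle U := by
  ext w
  constructor <;> exact fun ⟨u, hu, v, hv, h⟩ => ⟨v, hv, u, hu, h.symm⟩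

theorem shuffle_one (U : Language α) : U.shuffle 1 = U := by
  ext w
  constructor
  · rintro ⟨u, hu, v, rfl, h⟩
    exact IsShuffle.nil_right_iff.mp h ▸ hu
  · exact fun hw => ⟨w, hw, [], rfl, IsShuffle.nil_right_iff.mpr rfl⟩

theorem shuffle_assoc_le (U V W : Language α) :
    (U.shuffle V).shuffle W ≤ U.shuffle (V.shuffle W) := by
  rintro w ⟨x, ⟨u, hu, v, hv, hx⟩, z, hz, hw⟩
  obtain ⟨y, hy, hw⟩ := hx.assoc hw
  exact ⟨u, hu, y, ⟨v, hv, z, hz, hy⟩, hw⟩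

theorem shuffle_assoc (U V W : Language α) :
    (U.shuffle V).shuffle W = U.shuffle (V.shuffle W) := by
  refine le_antisymm (shuffle_assoc_le U V W) ?_
  calc U.shuffle (V.shuffle W) = (W.shuffle V).shuffle U := by
        rw [shuffle_comm V, shuffle_comm]
    _ ≤ W.shuffle (V.shuffle U) := shuffle_assoc_le W V U
    _ = (U.shuffle V).shuffle W := by rw [shuffle_comm V, shuffle_comm]

theorem shuffle_mono {U₁ U₂ V₁ V₂ : Language α} (hU : U₁ ≤ U₂) (hV : V₁ ≤ V₂) :
    U₁.shuffle V₁ ≤ U₂.shuffle V₂ :=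
  fun _ ⟨u, hu, v, hv, h⟩ => ⟨u, hU hu, v, hV hv, h⟩

theorem shufflePow_mono (h : L ≤ M) (n : ℕ) : L.shufflePow n ≤ M.shufflePow n := by
  induction n with
  | zero => exact le_rfl
  | succ n ih => exact shuffle_mono ih h

theorem shufflePow_shuffle_shufflePow (L : Language α) (m k : ℕ) :
    (L.shufflePow m).shuffle (L.shufflePow k) ≤ L.shufflePow (m + k) := by
  induction k with
  | zero => exact (shuffle_one _).le
  | succ k ih =>
    rw [shufflePow, ← shuffle_assoc]
    exact shuffle_mono ih le_rfl

theorem shufflePow_le_shuffleStar (L : Language α) (n : ℕ) : L.shufflePow n ≤ L.shuffleStar :=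
  fun _ hw => ⟨n, hw⟩

theorem shuffleStar_mono (h : L ≤ M) : L.shuffleStar ≤ M.shuffleStar :=
  fun _ ⟨n, hw⟩ => ⟨n, shufflePow_mono h n hw⟩

theorem one_le_shuffleStar (L : Language α) : 1 ≤ L.shuffleStar :=
  shufflePow_le_shuffleStar L 0

theorem shuffleStar_shuffle_le (L : Language α) : L.shuffleStar.shuffle L ≤ L.shuffleStar :=
  fun _ ⟨u, ⟨n, hu⟩, v, hv, h⟩ => ⟨n + 1, u, hu, v, hv, h⟩

theorem shuffleStar_shuffle_shuffleStar (L : Language α) :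
    L.shuffleStar.shuffle L.shuffleStar ≤ L.shuffleStar :=
  fun _ ⟨u, ⟨m, hu⟩, v, ⟨k, hv⟩, h⟩ =>
    shufflePow_le_shuffleStar L _ (shufflePow_shuffle_shufflePow L m k ⟨u, hu, v, hv, h⟩)

theorem shufflePow_union_le (U V : Language α) (n : ℕ) :
    (U ∪ V).shufflePow n ≤ U.shuffleStar.shuffle V.shuffleStar := by
  induction n with
  | zero =>
    rw [shufflePow, ← shuffle_one 1]
    exact shuffle_mono (one_le_shuffleStar U) (one_le_shuffleStar V)
  | succ n ih =>
    rintro w ⟨x, hx, y, hy | hy, h⟩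
    · have hw : w ∈ (U.shuffleStar.shuffle V.shuffleStar).shuffle U :=
        ⟨x, ih hx, y, hy, h⟩
      rw [shuffle_assoc, shuffle_comm V.shuffleStar, ← shuffle_assoc] at hw
      exact shuffle_mono (shuffleStar_shuffle_le U) le_rfl hw
    · have hw : w ∈ (U.shuffleStar.shuffle V.shuffleStar).shuffle V :=
        ⟨x, ih hx, y, hy, h⟩
      rw [shuffle_assoc] at hw
      exact shuffle_mono le_rfl (shuffleStar_shuffle_le V) hw

end Language

theorem shuffleStar_union {α : Type*} (U V : Language α) :
    (U ∪ V).shuffleStar = U.shuffleStar.shuffle V.shuffleStar := by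
  refine le_antisymm (fun w ⟨n, hw⟩ => Language.shufflePow_union_le U V n hw) ?_
  calc U.shuffleStar.shuffle V.shuffleStar
      ≤ (U ∪ V).shuffleStar.shuffle (U ∪ V).shuffleStar :=
        Language.shuffle_mono (Language.shuffleStar_mono fun _ => Or.inl)
          (Language.shuffleStar_mono fun _ => Or.inr)
    _ ≤ (U ∪ V).shuffleStar := (U ∪ V).shuffleStar_shuffle_shuffleStar
end

section
/- For every language U over an alphabet Σ, perm(U*) = perm(U)^{⧢,*}, i.e., the commutative closure of the Kleene star equals the iterated shuffle of the commutative closure. -/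
/-!
Membership in `perm L` only sees a word up to permutation, and a shuffle of `u` and `v` is a
permutation of `u ++ v`. Conversely every permutation of `u ++ v` is a shuffle of a permutation
of `u` with a permutation of `v`, so shuffle powers of a permutation-closed language are
permutation-closed. Hence a product `x₁ ⋯ xₙ` of words of `U` lies in `perm(U)^{⧢,n}`, and each
word of `perm(U)^{⧢,n}` is a permutation of such a product.
-/

namespace IsShuffle

variable {α : Type*} {u v w : List α}

theorem perm_append (h : IsShuffle u v w) : w.Perm (u ++ v) := by
  induction h with
  | nil => exact .nil
  | left _ ih => exact ih.cons _
  | right _ ih => exact List.perm_cons_append_cons _ ih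

end IsShuffle

theorem isShuffle_append {α : Type*} (u v : List α) : IsShuffle u v (u ++ v) := by
  induction u with
  | nil =>
    induction v with
    | nil => exact .nil
    | cons _ _ ih => exact .right ih
  | cons _ _ ih => exact .left ih

theorem exists_isShuffle_of_perm_append {α : Type*} [DecidableEq α] {w u v : List α}
    (h : w.Perm (u ++ v)) : ∃ u' v', IsShuffle u' v' w ∧ u'.Perm u ∧ v'.Perm v := by
  induction w generalizing u v with
  | nil =>
    obtain ⟨rfl, rfl⟩ := List.append_eq_nil_iff.mp (List.perm_nil.mp h.symm)
    exact ⟨[], [], .nil, .nil, .nil⟩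
  | cons a w ih =>
    rcases List.mem_append.mp (h.subset List.mem_cons_self) with ha | ha
    · have hw : w.Perm (u.erase a ++ v) :=
        (h.trans ((List.perm_cons_erase ha).append_right v)).cons_inv
      obtain ⟨u', v', hs, hu, hv⟩ := ih hw
      exact ⟨a :: u', v', hs.left, (hu.cons a).trans (List.perm_cons_erase ha).symm, hv⟩
    · have hw : w.Perm (u ++ v.erase a) :=
        (h.trans (((List.perm_cons_erase ha).append_left u).trans List.perm_middle)).cons_inv
      obtain ⟨u', v', hs, hu, hv⟩ := ih hw
      exact ⟨u', a :: v', hs.right, hu, (hv.cons a).trans (List.perm_cons_erase ha).symm⟩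

namespace Language

variable {α : Type*}

theorem mem_perm_iff [DecidableEq α] {L : Language α} {w : List α} :
    w ∈ L.perm ↔ ∃ x ∈ L, w.Perm x :=
  exists_congr fun _ => and_congr_right fun _ => List.perm_iff_count.symm

theorem le_perm [DecidableEq α] (L : Language α) : L ≤ L.perm :=
  fun w hw => mem_perm_iff.mpr ⟨w, hw, .refl w⟩

def PermClosed (L : Language α) : Prop :=
  ∀ ⦃x w : List α⦄, x ∈ L → w.Perm x → w ∈ L

theorem permClosed_perm [DecidableEq α] (L : Language α) : L.perm.PermClosed := by
  intro x w hx hw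
  obtain ⟨y, hy, hxy⟩ := mem_perm_iff.mp hx
  exact mem_perm_iff.mpr ⟨y, hy, hw.trans hxy⟩

theorem PermClosed.shufflePow [DecidableEq α] {L : Language α} (hL : L.PermClosed) :
    ∀ n, (L.shufflePow n).PermClosed
  | 0 => fun _ _ hx hw => List.perm_nil.mp ((mem_one _).mp hx ▸ hw)
  | n + 1 => fun x w ⟨u, hu, v, hv, hs⟩ hw => by
    obtain ⟨u', v', hs', hu', hv'⟩ := exists_isShuffle_of_perm_append (hw.trans hs.perm_append)
    exact ⟨u', PermClosed.shufflePow hL n hu hu', v', hL hv hv', hs'⟩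

theorem flatten_mem_shufflePow {L : Language α} {xs : List (List α)} (h : ∀ x ∈ xs, x ∈ L) :
    xs.flatten ∈ L.shufflePow xs.length := by
  induction xs with
  | nil => exact rfl
  | cons x xs ih =>
    exact ⟨xs.flatten, ih fun y hy => h y (List.mem_cons_of_mem x hy), x,
      h x List.mem_cons_self, (isShuffle_append x xs.flatten).symm⟩

theorem shufflePow_perm_le_perm_kstar [DecidableEq α] (U : Language α) :
    ∀ n, U.perm.shufflePow n ≤ (KStar.kstar U).perm
  | 0, _, rfl => le_perm _ (nil_mem_kstar U)
  | n + 1, w, ⟨u, hu, v, hv, hs⟩ => by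
    obtain ⟨y, hy, huy⟩ := mem_perm_iff.mp (shufflePow_perm_le_perm_kstar U n hu)
    obtain ⟨z, hz, hvz⟩ := mem_perm_iff.mp hv
    have hyz : y ++ z ∈ KStar.kstar U :=
      kstar_mul_kstar U ▸ append_mem_mul hy ((le_kstar : U ≤ KStar.kstar U) hz)
    exact mem_perm_iff.mpr ⟨y ++ z, hyz, hs.perm_append.trans (huy.append hvz)⟩

end Language

theorem perm_kstar {α : Type*} [DecidableEq α] (U : Language α) :
    (KStar.kstar U).perm = U.perm.shuffleStar := by
  ext w
  constructor
  · intro hw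
    obtain ⟨x, hx, hwx⟩ := Language.mem_perm_iff.mp hw
    obtain ⟨xs, rfl, hxs⟩ := Language.mem_kstar.mp hx
    have hflat := Language.flatten_mem_shufflePow fun y hy => U.le_perm (hxs y hy)
    exact ⟨xs.length, (U.permClosed_perm.shufflePow _) hflat hwx⟩
  · rintro ⟨n, hn⟩
    exact U.shufflePow_perm_le_perm_kstar n hn
end

section
/- Let L ⊆ Σ* be a finite language. The language perm(L)^{⧢,*} is regular if and only if for every letter a ∈ Σ such that some word of L contains a, L contains a non-empty word consisting only of the letter a (i.e., L ∩ a⁺ ≠ ∅). -/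
/-!
Since `IsShuffle` adds letter counts and every splitting of the count vector of a word is
realised by a shuffle, `perm(L)^{⧢,*}` is the set of words whose count vector `parikh w` lies in
the additive submonoid `S ⊆ ℕ^α` generated by the count vectors `G` of the words of `L`.

If every letter `b` occurring in `L` has a power `b^n ∈ L`, there is a common `k > 0` with
`k • single b 1 ∈ S` for all those `b`. With `M` bounding the lengths of the words of `L`, a
representation of `v ∈ S` with `v a > #G * k * M` uses some generator `g` with `g a ≠ 0` at least
`k` times, and `k • g - k • single a 1` is again in `S`. Hence, above the threshold
`B = #G * k * M + 1`, membership in `S` only depends on the counts modulo `k`, so the left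
quotients of the language are indexed by finitely many reduced count vectors (Myhill–Nerode).

If a letter `a` occurs in `w ∈ L` but no `a^n` with `n > 0` lies in `L`, every generator, hence
every `v ∈ S`, satisfies `(M + 1) * v a ≤ M * ∑ b, v b`. So `a^(p n) r^n` (with `p` the number of
`a`'s in `w` and `r` the other letters of `w`) belongs to the language while `a^(p m) r^n` does
not once `m > M * |r| * n`, which leaves infinitely many left quotients.
-/

open Function

section

variable {α : Type*}

section Parikh

variable [DecidableEq α]

def parikh (w : List α) : α → ℕ := fun a => w.count a

@[simp]
theorem parikh_apply (w : List α) (a : α) : parikh w a = w.count a := rfl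

@[simp]
theorem parikh_nil : parikh ([] : List α) = 0 := by
  funext a; simp

theorem parikh_cons (c : α) (w : List α) : parikh (c :: w) = Pi.single c 1 + parikh w := by
  funext a
  by_cases h : a = c
  · subst h; simp [add_comm]
  · simp [h, Ne.symm h]

theorem parikh_append (u v : List α) : parikh (u ++ v) = parikh u + parikh v := by
  funext a; simp

theorem parikh_eq_zero_iff {w : List α} : parikh w = 0 ↔ w = [] := by
  refine ⟨fun h => List.eq_nil_iff_forall_not_mem.2 fun a ha => ?_, fun h => h ▸ parikh_nil⟩
  simpa [List.count_eq_zero.2] using (List.count_pos_iff.2 ha).ne' (congrFun h a)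

theorem parikh_replicate (n : ℕ) (a : α) : parikh (List.replicate n a) = n • Pi.single a 1 := by
  funext b
  by_cases h : b = a
  · subst h; simp
  · simp [List.count_replicate, h, Ne.symm h]

theorem parikh_flatten_replicate (n : ℕ) (w : List α) :
    parikh (List.replicate n w).flatten = n • parikh w := by
  funext a
  simp [List.count_flatten]

theorem parikh_eq_parikh_iff_perm {u v : List α} : parikh u = parikh v ↔ u.Perm v := by
  rw [List.perm_iff_count, funext_iff]
  rfl

theorem sum_parikh [Fintype α] (w : List α) : ∑ a, parikh w a = w.length := by
  simpa using Multiset.sum_count_eq_card (s := Finset.univ) (m := (w : Multiset α))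
    fun a _ => Finset.mem_univ a

theorem IsShuffle.parikh_eq {u v w : List α} (h : IsShuffle u v w) :
    parikh w = parikh u + parikh v := by
  induction h with
  | nil => simp
  | left _ ih => simp only [parikh_cons, ih, add_assoc]
  | right _ ih => simp only [parikh_cons, ih, add_left_comm]

theorem exists_eq_single_add_of_pos {x : α → ℕ} {c : α} (hc : 0 < x c) :
    ∃ x' : α → ℕ, x = Pi.single c 1 + x' := by
  refine ⟨x - Pi.single c 1, (add_tsub_cancel_of_le fun b => ?_).symm⟩
  by_cases h : b = c
  · subst h; simpa using Nat.one_le_of_lt hc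
  · simp [h]

theorem IsShuffle.exists_of_parikh_eq_add :
    ∀ {w : List α} {x y : α → ℕ}, parikh w = x + y →
      ∃ u v, IsShuffle u v w ∧ parikh u = x ∧ parikh v = y
  | [], x, y, h => by
    obtain ⟨rfl, rfl⟩ := add_eq_zero.1 (parikh_nil.symm.trans h).symm
    exact ⟨[], [], .nil, parikh_nil, parikh_nil⟩
  | c :: w, x, y, h => by
    have hc : 0 < x c ∨ 0 < y c := by
      have := congrFun h c
      simp only [parikh_apply, List.count_cons_self, Pi.add_apply] at this
      omega
    rcases hc with hc | hc
    · obtain ⟨x', rfl⟩ := exists_eq_single_add_of_pos hc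
      rw [parikh_cons, add_assoc] at h
      obtain ⟨u, v, huv, rfl, rfl⟩ := exists_of_parikh_eq_add (add_left_cancel h)
      exact ⟨c :: u, v, .left huv, parikh_cons c u, rfl⟩
    · obtain ⟨y', rfl⟩ := exists_eq_single_add_of_pos hc
      rw [parikh_cons, add_left_comm] at h
      obtain ⟨u, v, huv, rfl, rfl⟩ := exists_of_parikh_eq_add (add_left_cancel h)
      exact ⟨u, c :: v, .right huv, rfl, parikh_cons c v⟩

theorem Language.mem_perm_iff_s14 {L : Language α} {w : List α} :
    w ∈ L.perm ↔ ∃ x ∈ L, parikh w = parikh x := by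
  simp only [Language.perm, funext_iff, parikh_apply]
  rfl

theorem Language.mem_perm_shuffleStar_iff {L : Language α} {w : List α} :
    w ∈ L.perm.shuffleStar ↔ parikh w ∈ AddSubmonoid.closure (parikh '' L) := by
  constructor
  · rintro ⟨n, hn⟩
    induction n generalizing w with
    | zero =>
      rw [Language.shufflePow, Language.mem_one] at hn
      simp [hn]
    | succ n ih =>
      obtain ⟨u, hu, v, hv, huv⟩ := hn
      obtain ⟨x, hx, hvx⟩ := Language.mem_perm_iff_s14.1 hv
      rw [huv.parikh_eq, hvx]
      exact add_mem (ih hu) (AddSubmonoid.subset_closure ⟨x, hx, rfl⟩)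
  · generalize hp : parikh w = p
    intro h
    induction h using AddSubmonoid.closure_induction_right generalizing w with
    | zero => exact ⟨0, (Language.mem_one w).2 (parikh_eq_zero_iff.1 hp)⟩
    | add_right p _ g hg ih =>
      obtain ⟨x, hx, rfl⟩ := hg
      obtain ⟨u, v, huv, hu, hv⟩ := IsShuffle.exists_of_parikh_eq_add hp
      obtain ⟨n, hn⟩ := ih hu
      exact ⟨n + 1, u, hn, v, Language.mem_perm_iff_s14.2 ⟨x, hx, hv⟩, huv⟩

end Parikh

theorem comp_iff_of_forall_update_iff {ι β : Type*} [Fintype ι] [DecidableEq ι]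
    {P : (ι → β) → Prop} {f : β → β} (h : ∀ v i, P (update v i (f (v i))) ↔ P v) (v : ι → β) :
    P (f ∘ v) ↔ P v := by
  classical
  suffices ∀ s : Finset ι, P (s.piecewise (f ∘ v) v) ↔ P v by
    simpa using this Finset.univ
  intro s
  induction s using Finset.induction_on with
  | empty => simp
  | insert i s hi ih =>
    rw [Finset.piecewise_insert, ← ih]
    convert h _ i using 3
    rw [Finset.piecewise_eq_of_notMem _ _ _ hi]
    rfl

/-- The representative of `n` in the quotient of `ℕ` by the congruence `B = B + k`. -/
def capMod (B k n : ℕ) : ℕ := if n < B then n else B + (n - B) % k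

section CapMod

variable {B k n : ℕ}

theorem capMod_of_lt (h : n < B) : capMod B k n = n := if_pos h

theorem capMod_of_le (h : B ≤ n) : capMod B k n = B + (n - B) % k := if_neg h.not_gt

theorem le_capMod (h : B ≤ n) : B ≤ capMod B k n :=
  (capMod_of_le h).symm ▸ Nat.le_add_right _ _

theorem capMod_lt (hk : 0 < k) (n : ℕ) : capMod B k n < B + k := by
  unfold capMod
  split
  · omega
  · have := Nat.mod_lt (n - B) hk
    omega

theorem exists_eq_capMod_add_mul (B k n : ℕ) : ∃ t, n = capMod B k n + k * t := by
  unfold capMod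
  split
  · exact ⟨0, rfl⟩
  · refine ⟨(n - B) / k, ?_⟩
    have := Nat.mod_add_div (n - B) k
    omega

theorem capMod_capMod_add (n m : ℕ) : capMod B k (capMod B k n + m) = capMod B k (n + m) := by
  rcases Nat.lt_or_ge n B with h | h
  · rw [capMod_of_lt h]
  · have h' : B ≤ capMod B k n + m := (le_capMod h).trans (Nat.le_add_right _ _)
    rw [capMod_of_le h', capMod_of_le (by omega : B ≤ n + m), capMod_of_le h,
      show B + (n - B) % k + m - B = (n - B) % k + m by omega, Nat.mod_add_mod,
      show n + m - B = n - B + m by omega]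

end CapMod

section Saturation

open Finset

theorem exists_mem_apply_ne_zero_of_mem_closure {G : Set (α → ℕ)} {v : α → ℕ}
    (hv : v ∈ AddSubmonoid.closure G) {b : α} (hb : v b ≠ 0) : ∃ g ∈ G, g b ≠ 0 := by
  induction hv using AddSubmonoid.closure_induction with
  | mem g hg => exact ⟨g, hg, hb⟩
  | zero => exact absurd rfl hb
  | add x y _ _ ihx ihy =>
    by_cases hx : x b = 0
    · exact ihy (by simpa [hx] using hb)
    · exact ihx hx

theorem nsmul_mem_of_forall_ne_zero [Fintype α] [DecidableEq α] {T : AddSubmonoid (α → ℕ)}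
    {k : ℕ} {u : α → ℕ} (hu : ∀ b, u b ≠ 0 → k • Pi.single b 1 ∈ T) : k • u ∈ T := by
  rw [← Finset.univ_sum_single u, Finset.smul_sum]
  refine sum_mem fun b _ => ?_
  by_cases hb : u b = 0
  · simp [hb]
  · have : k • Pi.single b (u b) = u b • k • (Pi.single b 1 : α → ℕ) := by
      ext c
      by_cases hc : c = b
      · subst hc; simp [mul_comm]
      · simp [hc]
    rw [this]
    exact AddSubmonoid.nsmul_mem _ (hu b hb) _

variable {G : Finset (α → ℕ)} {k M : ℕ}

theorem exists_eq_add_nsmul_of_card_mul_lt {a : α} (hM : ∀ g ∈ G, g a ≤ M) {v : α → ℕ}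
    (hv : v ∈ AddSubmonoid.closure (G : Set (α → ℕ))) (hva : #G * k * M < v a) :
    ∃ g ∈ G, g a ≠ 0 ∧ ∃ w ∈ AddSubmonoid.closure (G : Set (α → ℕ)), v = w + k • g := by
  classical
  obtain ⟨m, hmG, rfl⟩ := AddSubmonoid.exists_multiset_of_mem_closure hv
  obtain ⟨g, hgm, hga, hkg⟩ : ∃ g ∈ m, g a ≠ 0 ∧ k ≤ m.count g := by
    by_contra! hsmall
    refine hva.not_ge ?_
    calc m.sum a = ∑ g ∈ m.toFinset, m.count g * g a := by
          rw [Finset.sum_multiset_count, Finset.sum_apply]; rfl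
      _ ≤ ∑ _g ∈ m.toFinset, k * M := by
          refine Finset.sum_le_sum fun g hg => ?_
          rw [Multiset.mem_toFinset] at hg
          by_cases hga : g a = 0
          · simp [hga]
          · exact Nat.mul_le_mul (hsmall g hg hga).le (hM g (hmG g hg))
      _ = #m.toFinset * (k * M) := by rw [sum_const, smul_eq_mul]
      _ ≤ #G * k * M := by
          rw [mul_assoc]
          exact Nat.mul_le_mul_right _
            (card_le_card fun g hg => hmG g (Multiset.mem_toFinset.1 hg))
  obtain ⟨m', rfl⟩ := exists_add_of_le (Multiset.le_count_iff_replicate_le.1 hkg)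
  refine ⟨g, hmG g hgm, hga, m'.sum, AddSubmonoid.multiset_sum_mem _ _ fun x hx =>
    AddSubmonoid.subset_closure (hmG x (Multiset.mem_add.2 (Or.inr hx))), ?_⟩
  rw [Multiset.sum_add, Multiset.sum_replicate, add_comm]

variable [Fintype α] [DecidableEq α]
  (hsingle : ∀ g ∈ G, ∀ b, g b ≠ 0 → k • Pi.single b 1 ∈ AddSubmonoid.closure (G : Set (α → ℕ)))
  (hM : ∀ g ∈ G, ∀ b, g b ≤ M)
include hsingle hM

theorem update_add_mem_closure_iff {v : α → ℕ} {a : α} {c : ℕ} (hc : #G * k * M < c) :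
    update v a (c + k) ∈ AddSubmonoid.closure (G : Set (α → ℕ)) ↔
      update v a c ∈ AddSubmonoid.closure (G : Set (α → ℕ)) := by
  constructor
  · intro h
    obtain ⟨g, hg, hga, w, hw, hvw⟩ := exists_eq_add_nsmul_of_card_mul_lt (k := k)
      (fun g hg => hM g hg a) h (by simp only [update_self]; omega)
    have : update v a c = w + k • (g - Pi.single a 1) := by
      funext b
      have hb := congrFun hvw b
      by_cases hba : b = a
      · subst hba
        simp only [update_self, Pi.add_apply, Pi.smul_apply, Pi.sub_apply, Pi.single_eq_same,
          smul_eq_mul] at hb ⊢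
        rw [Nat.mul_sub_one]
        have : k ≤ k * g b := Nat.le_mul_of_pos_right k (Nat.pos_of_ne_zero hga)
        omega
      · simpa [hba] using hb
    rw [this]
    refine add_mem hw (nsmul_mem_of_forall_ne_zero fun b hb => hsingle g hg b fun hgb => hb ?_)
    simp [hgb]
  · intro h
    obtain ⟨g, hg, hga⟩ := exists_mem_apply_ne_zero_of_mem_closure h (b := a)
      (by simp only [update_self]; omega)
    have : update v a (c + k) = update v a c + k • Pi.single a 1 := by
      funext b
      by_cases hba : b = a
      · subst hba; simp
      · simp [hba]
    rw [this]
    exact add_mem h (hsingle g hg a hga)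

theorem update_add_mul_mem_closure_iff {v : α → ℕ} {a : α} {c : ℕ} (hc : #G * k * M < c)
    (t : ℕ) : update v a (c + k * t) ∈ AddSubmonoid.closure (G : Set (α → ℕ)) ↔
      update v a c ∈ AddSubmonoid.closure (G : Set (α → ℕ)) := by
  induction t with
  | zero => simp
  | succ t ih =>
    rw [mul_add_one, ← add_assoc,
      update_add_mem_closure_iff hsingle hM (hc.trans_le (Nat.le_add_right _ _)), ih]

theorem capMod_comp_mem_closure_iff (v : α → ℕ) :
    capMod (#G * k * M + 1) k ∘ v ∈ AddSubmonoid.closure (G : Set (α → ℕ)) ↔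
      v ∈ AddSubmonoid.closure (G : Set (α → ℕ)) := by
  refine comp_iff_of_forall_update_iff (fun v a => ?_) v
  rcases Nat.lt_or_ge (v a) (#G * k * M + 1) with h | h
  · rw [capMod_of_lt h, update_eq_self]
  · obtain ⟨t, ht⟩ := exists_eq_capMod_add_mul (#G * k * M + 1) k (v a)
    conv_rhs => rw [← update_eq_self a v, ht]
    exact (update_add_mul_mem_closure_iff hsingle hM (le_capMod h) t).symm

end Saturation

theorem isRegular_setOf_parikh_mem [Fintype α] [DecidableEq α] {S : Set (α → ℕ)} {f : ℕ → ℕ}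
    (hf : (Set.range f).Finite) (hf_add : ∀ n m, f (f n + m) = f (n + m))
    (hS : ∀ v, f ∘ v ∈ S ↔ v ∈ S) : Language.IsRegular ({w | parikh w ∈ S} : Language α) := by
  have := hf.to_subtype
  refine .of_finite_range_leftQuotient ((Set.finite_range fun r : α → Set.range f =>
    ({y | (fun b => (r b : ℕ)) + parikh y ∈ S} : Language α)).subset ?_)
  rintro _ ⟨x, rfl⟩
  refine ⟨fun b => ⟨f (parikh x b), Set.mem_range_self _⟩, ?_⟩
  ext y
  change (fun b => f (parikh x b)) + parikh y ∈ S ↔ parikh (x ++ y) ∈ S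
  rw [← hS, ← hS (parikh (x ++ y)), parikh_append]
  simp only [comp_def, Pi.add_apply, hf_add]

theorem Language.not_isRegular_of_append_mem {K : Language α} (x y : ℕ → List α) (C : ℕ)
    (hmem : ∀ n, x n ++ y n ∈ K) (hnot : ∀ m n, C * n < m → x m ++ y n ∉ K) :
    ¬ K.IsRegular := by
  intro hK
  obtain ⟨i, j, hij, hq⟩ := hK.finite_range_leftQuotient.exists_lt_map_eq_of_forall_mem
    (f := fun i => K.leftQuotient (x ((C + 1) ^ i))) fun i => Set.mem_range_self _
  refine hnot ((C + 1) ^ j) ((C + 1) ^ i) ?_ ?_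
  · calc C * (C + 1) ^ i < (C + 1) ^ (i + 1) := by
          rw [pow_succ]; nlinarith [pow_pos (Nat.succ_pos C) i]
      _ ≤ (C + 1) ^ j := Nat.pow_le_pow_right (Nat.succ_pos C) hij
  · rw [← Language.mem_leftQuotient, ← hq]
    exact hmem _

theorem mul_apply_le_of_mem_closure [Fintype α] {G : Set (α → ℕ)} {a : α} {M : ℕ}
    (hG : ∀ g ∈ G, (M + 1) * g a ≤ M * ∑ b, g b) {v : α → ℕ}
    (hv : v ∈ AddSubmonoid.closure G) : (M + 1) * v a ≤ M * ∑ b, v b := by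
  induction hv using AddSubmonoid.closure_induction with
  | mem g hg => exact hG g hg
  | zero => simp
  | add x y _ _ hx hy =>
    simp only [Pi.add_apply, Finset.sum_add_distrib, mul_add]
    exact add_le_add hx hy

theorem mul_count_le_of_exists_ne [DecidableEq α] {a : α} {M : ℕ} {w : List α}
    (hM : w.length ≤ M) (hw : a ∈ w → ∃ x ∈ w, x ≠ a) : (M + 1) * w.count a ≤ M * w.length := by
  by_cases ha : a ∈ w
  · obtain ⟨x, hx, hxa⟩ := hw ha
    have hlt : w.count a < w.length := by
      rw [List.count_eq_length_filter, List.length_filter_lt_length_iff_exists]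
      exact ⟨x, hx, by simpa using hxa⟩
    calc (M + 1) * w.count a = M * w.count a + w.count a := by ring
      _ ≤ M * w.count a + M := by omega
      _ = M * (w.count a + 1) := by ring
      _ ≤ M * w.length := Nat.mul_le_mul_left M hlt
  · simp [List.count_eq_zero.2 ha]

section Main

variable [Fintype α] [DecidableEq α] {L : Language α}

theorem exists_pos_nsmul_single_mem_closure
    (hunary : ∀ a : α, (∃ w ∈ L, a ∈ w) → ∃ w ∈ L, w ≠ [] ∧ ∀ x ∈ w, x = a) :
    ∃ k, 0 < k ∧ ∀ g ∈ parikh '' L, ∀ b, g b ≠ 0 →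
      k • Pi.single b 1 ∈ AddSubmonoid.closure (parikh '' L) := by
  have hperiod : ∀ b, ∃ n, 0 < n ∧ ((∃ w ∈ L, b ∈ w) → n • Pi.single b 1 ∈ parikh '' L) := by
    intro b
    by_cases hb : ∃ w ∈ L, b ∈ w
    · obtain ⟨w, hwL, hw, hwb⟩ := hunary b hb
      refine ⟨w.length, List.length_pos_iff.2 hw, fun _ => ⟨w, hwL, ?_⟩⟩
      conv_lhs => rw [List.eq_replicate_iff.2 ⟨rfl, hwb⟩]
      exact parikh_replicate _ _
    · exact ⟨1, one_pos, fun h => absurd h hb⟩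
  choose φ hφ hφL using hperiod
  refine ⟨∏ b, φ b, Finset.prod_pos fun b _ => hφ b, ?_⟩
  rintro _ ⟨w, hw, rfl⟩ b hb
  obtain ⟨c, hc⟩ := Finset.dvd_prod_of_mem φ (Finset.mem_univ b)
  rw [hc, mul_comm, mul_smul]
  exact AddSubmonoid.nsmul_mem _ (AddSubmonoid.subset_closure
    (hφL b ⟨w, hw, List.count_pos_iff.1 (Nat.pos_of_ne_zero hb)⟩)) c

theorem Language.isRegular_perm_shuffleStar (hL : L.Finite)
    (hunary : ∀ a : α, (∃ w ∈ L, a ∈ w) → ∃ w ∈ L, w ≠ [] ∧ ∀ x ∈ w, x = a) :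
    L.perm.shuffleStar.IsRegular := by
  obtain ⟨k, hk, hkG⟩ := exists_pos_nsmul_single_mem_closure hunary
  obtain ⟨M, hM⟩ := (hL.image List.length).bddAbove
  set G := (hL.image parikh).toFinset
  have hG : (G : Set (α → ℕ)) = parikh '' L := Set.Finite.coe_toFinset _
  have hGM : ∀ g ∈ G, ∀ b, g b ≤ M := by
    rintro _ hg b
    obtain ⟨w, hw, rfl⟩ := (Set.Finite.mem_toFinset _).1 hg
    exact (List.count_le_length).trans (hM ⟨w, hw, rfl⟩)
  have hK : L.perm.shuffleStar = {w | parikh w ∈ AddSubmonoid.closure (G : Set (α → ℕ))} := by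
    ext w
    rw [hG]
    exact Language.mem_perm_shuffleStar_iff
  rw [← hG] at hkG
  rw [hK]
  exact isRegular_setOf_parikh_mem
    ((Set.finite_Iio _).subset (Set.range_subset_iff.2 (capMod_lt hk)))
    capMod_capMod_add (capMod_comp_mem_closure_iff hkG hGM)

theorem Language.not_isRegular_perm_shuffleStar (hL : L.Finite) {a : α} {w₀ : List α}
    (hw₀ : w₀ ∈ L) (ha : a ∈ w₀) (hno : ∀ w ∈ L, a ∈ w → ∃ x ∈ w, x ≠ a) :
    ¬ L.perm.shuffleStar.IsRegular := by
  obtain ⟨M, hM⟩ := (hL.image List.length).bddAbove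
  have hbound : ∀ w ∈ L.perm.shuffleStar, (M + 1) * w.count a ≤ M * w.length := by
    intro w hw
    have hG : ∀ g ∈ parikh '' L, (M + 1) * g a ≤ M * ∑ b, g b := by
      rintro _ ⟨w, hw, rfl⟩
      rw [sum_parikh]
      exact mul_count_le_of_exists_ne (hM ⟨w, hw, rfl⟩) (hno w hw)
    rw [← sum_parikh]
    exact mul_apply_le_of_mem_closure hG (Language.mem_perm_shuffleStar_iff.1 hw)
  set r := w₀.filter (fun x => !decide (x = a))
  have hra : r.count a = 0 := List.count_eq_zero.2 fun h => by simpa using (List.mem_filter.1 h).2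
  have hw₀r : parikh w₀ = w₀.count a • Pi.single a 1 + parikh r := by
    rw [← parikh_replicate, ← List.filter_eq, ← parikh_append]
    exact parikh_eq_parikh_iff_perm.2 (List.filter_append_perm _ _).symm
  refine Language.not_isRegular_of_append_mem (fun m => List.replicate (m * w₀.count a) a)
    (fun n => (List.replicate n r).flatten) (M * r.length) (fun n => ?_) fun m n hmn hmem => ?_
  · rw [Language.mem_perm_shuffleStar_iff, parikh_append, parikh_replicate,
      parikh_flatten_replicate, mul_smul, ← smul_add, ← hw₀r]
    exact AddSubmonoid.nsmul_mem _
      (AddSubmonoid.subset_closure (Set.mem_image_of_mem parikh hw₀)) n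
  · have hle : (M + 1) * (m * w₀.count a) ≤ M * (m * w₀.count a + n * r.length) := by
      simpa [List.count_flatten, hra] using hbound _ hmem
    have hpos : 0 < w₀.count a := List.count_pos_iff.2 ha
    nlinarith

end Main

end

theorem finite_perm_shuffleStar_regular_iff {α : Type*} [Fintype α]
    [DecidableEq α] (L : Language α) (hL : L.Finite) :
    L.perm.shuffleStar.IsRegular ↔
      ∀ a : α, (∃ w ∈ L, a ∈ w) → ∃ w ∈ L, w ≠ [] ∧ ∀ x ∈ w, x = a := by
  refine ⟨fun hreg a ⟨w₀, hw₀, ha⟩ => ?_, Language.isRegular_perm_shuffleStar hL⟩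
  by_contra! hno
  exact Language.not_isRegular_perm_shuffleStar hL hw₀ ha
    (fun w hw haw => hno w hw (List.ne_nil_of_mem haw)) hreg
end
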